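/- arXiv:1910.07769 — 3 statements merged into one kernel-verified Lean document; each statement's English description precedes it below -/
import Mathlib

section
/- For every integer p ≥ 1 and all real numbers a, b, one has |a^p · 1_{a < 0} − b^p · 1_{b < 0}| ≤ |a − b| · ∑_{k=0}^{p−1} |a|^{p−1−k}|b|^k. -/
/-!
When `a, b < 0` the bound follows from `a ^ p - b ^ p = (a - b) ∑ a ^ (p-1-k) b ^ k` and the
triangle inequality. When `a < 0 ≤ b`, only `|a| ^ p = |a| · |a| ^ (p - 1)` survives on the left;
then `|a| ≤ |a - b|` and `|a| ^ (p - 1)` is the `k = 0` term of the sum. The case `b < 0 ≤ a` is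
symmetric, since the sum is invariant under swapping `a` and `b`.
-/

open Finset

variable {R : Type*} [CommRing R] [LinearOrder R]

theorem abs_pow_sub_pow_le_abs_sub_mul_sum [IsOrderedRing R] (a b : R) (n : ℕ) :
    |a ^ n - b ^ n| ≤ |a - b| * ∑ k ∈ range n, |a| ^ (n - 1 - k) * |b| ^ k := by
  rw [← (Commute.all b a).mul_neg_geom_sum₂, abs_mul]
  gcongr
  calc |∑ k ∈ range n, b ^ k * a ^ (n - 1 - k)|
      ≤ ∑ k ∈ range n, |b ^ k * a ^ (n - 1 - k)| := abs_sum_le_sum_abs _ _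
    _ = ∑ k ∈ range n, |a| ^ (n - 1 - k) * |b| ^ k := by
      simp only [abs_mul, abs_pow, mul_comm]

theorem sum_pow_sub_mul_pow_comm {S : Type*} [CommSemiring S] (x y : S) (n : ℕ) :
    ∑ k ∈ range n, x ^ (n - 1 - k) * y ^ k = ∑ k ∈ range n, y ^ (n - 1 - k) * x ^ k := by
  simpa only [mul_comm] using geom_sum₂_comm y x n

theorem abs_le_abs_sub_of_mul_nonpos [IsStrictOrderedRing R] {a b : R} (hab : a * b ≤ 0) :
    |a| ≤ |a - b| := by
  rw [← sq_le_sq]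
  nlinarith [sq_nonneg b]

theorem pow_abs_le_abs_sub_mul_sum_of_mul_nonpos [IsStrictOrderedRing R] {a b : R}
    (hab : a * b ≤ 0) {n : ℕ} (hn : n ≠ 0) :
    |a| ^ n ≤ |a - b| * ∑ k ∈ range n, |a| ^ (n - 1 - k) * |b| ^ k := by
  have h_term : |a| ^ (n - 1) ≤ ∑ k ∈ range n, |a| ^ (n - 1 - k) * |b| ^ k := by
    simpa using single_le_sum (f := fun k ↦ |a| ^ (n - 1 - k) * |b| ^ k)
      (fun k _ ↦ by positivity) (mem_range.2 (Nat.pos_of_ne_zero hn))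
  calc |a| ^ n = |a| * |a| ^ (n - 1) := (mul_pow_sub_one hn _).symm
    _ ≤ _ := mul_le_mul (abs_le_abs_sub_of_mul_nonpos hab) h_term (by positivity) (abs_nonneg _)

/-- For every integer `p ≥ 1` and all real `a, b`,
`|a^p · 1_{a < 0} − b^p · 1_{b < 0}| ≤ |a − b| · ∑_{k=0}^{p−1} |a|^{p−1−k} |b|^k`. -/
theorem abs_pow_indicator_neg_sub_le (p : ℕ) (hp : 1 ≤ p) (a b : ℝ) :
    |a ^ p * (if a < 0 then (1 : ℝ) else 0) - b ^ p * (if b < 0 then (1 : ℝ) else 0)| ≤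
      |a - b| * ∑ k ∈ Finset.range p, |a| ^ (p - 1 - k) * |b| ^ k := by
  by_cases ha : a < 0 <;> by_cases hb : b < 0 <;>
    simp only [ha, hb, if_true, if_false, mul_one, mul_zero, sub_zero, zero_sub, abs_neg, sub_self,
      abs_zero]
  · exact abs_pow_sub_pow_le_abs_sub_mul_sum a b p
  · rw [abs_pow]
    exact pow_abs_le_abs_sub_mul_sum_of_mul_nonpos
      (mul_nonpos_of_nonpos_of_nonneg ha.le (not_lt.1 hb)) (Nat.one_le_iff_ne_zero.1 hp)
  · rw [abs_pow, abs_sub_comm, sum_pow_sub_mul_pow_comm]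
    exact pow_abs_le_abs_sub_mul_sum_of_mul_nonpos
      (mul_nonpos_of_nonpos_of_nonneg hb.le (not_lt.1 ha)) (Nat.one_le_iff_ne_zero.1 hp)
  · positivity
end

section
/- For every integer p ≥ 1 and all real numbers a, b with b ≤ a, one has |a − b|^p ≤ 2^{p−1}·(sgn(a)|a|^p − sgn(b)|b|^p). -/
/-!
The signed power `sgn x · |x|^p` is `x^p` for `x ≥ 0` and `-(-x)^p` for `x < 0`.
If `b < 0 ≤ a`, then `a - b = a + (-b)` with both summands nonnegative and the claim is the
power-mean bound `(x + y)^p ≤ 2^{p-1} (x^p + y^p)`. If `a` and `b` have the same sign, replacing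
them by `-b ≤ -a` when they are negative reduces to `0 ≤ b ≤ a`, where superadditivity of
`t ↦ t^p` gives `(a - b)^p ≤ a^p - b^p`; the factor `2^{p-1} ≥ 1` then only helps.
-/

section OrderedRing

variable {R : Type*} [Ring R] [PartialOrder R] [IsOrderedRing R] {x y : R} {n : ℕ}

theorem sub_pow_le_pow_sub_pow (hy : 0 ≤ y) (hyx : y ≤ x) (hn : n ≠ 0) :
    (x - y) ^ n ≤ x ^ n - y ^ n := by
  have := pow_add_pow_le (sub_nonneg.2 hyx) hy hn
  rw [sub_add_cancel] at this
  exact le_sub_right_of_add_le this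

theorem sub_pow_le_two_pow_mul_pow_sub_pow (hy : 0 ≤ y) (hyx : y ≤ x) (hn : n ≠ 0) :
    (x - y) ^ n ≤ 2 ^ (n - 1) * (x ^ n - y ^ n) :=
  (sub_pow_le_pow_sub_pow hy hyx hn).trans <|
    le_mul_of_one_le_left (sub_nonneg.2 (pow_le_pow_left₀ hy hyx n)) (one_le_pow₀ one_le_two)

end OrderedRing

noncomputable def signedPow (p : ℕ) (x : ℝ) : ℝ := Real.sign x * |x| ^ p

theorem signedPow_of_nonneg {p : ℕ} (hp : p ≠ 0) {x : ℝ} (hx : 0 ≤ x) :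
    signedPow p x = x ^ p := by
  rcases hx.lt_or_eq with hx | rfl
  · rw [signedPow, Real.sign_of_pos hx, abs_of_pos hx, one_mul]
  · simp [signedPow, zero_pow hp]

theorem signedPow_of_neg (p : ℕ) {x : ℝ} (hx : x < 0) : signedPow p x = -(-x) ^ p := by
  rw [signedPow, Real.sign_of_neg hx, abs_of_neg hx, neg_one_mul]

/-- For `p ≥ 1` and reals `b ≤ a`, `|a − b|^p ≤ 2^{p−1} (sgn(a)|a|^p − sgn(b)|b|^p)`. -/
theorem abs_sub_pow_le_signed_pow (p : ℕ) (hp : 1 ≤ p) (a b : ℝ) (hba : b ≤ a) :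
    |a - b| ^ p ≤ 2 ^ (p - 1) * (Real.sign a * |a| ^ p - Real.sign b * |b| ^ p) := by
  have hp0 : p ≠ 0 := by omega
  change _ ≤ _ * (signedPow p a - signedPow p b)
  rw [abs_of_nonneg (sub_nonneg.2 hba)]
  rcases le_or_gt 0 b with hb | hb
  · rw [signedPow_of_nonneg hp0 hb, signedPow_of_nonneg hp0 (hb.trans hba)]
    exact sub_pow_le_two_pow_mul_pow_sub_pow hb hba hp0
  rcases le_or_gt 0 a with ha | ha
  · rw [signedPow_of_nonneg hp0 ha, signedPow_of_neg p hb, sub_neg_eq_add, sub_eq_add_neg]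
    exact add_pow_le ha (neg_nonneg.2 hb.le) p
  · rw [signedPow_of_neg p ha, signedPow_of_neg p hb, neg_sub_neg]
    simpa only [neg_sub_neg] using
      sub_pow_le_two_pow_mul_pow_sub_pow (neg_nonneg.2 ha.le) (neg_le_neg hba) hp0
end

section
/- Let (X, μ) be a measure space, p ≥ 1 an integer, and f, g ∈ L^p(X, μ) with g(x) ≤ f(x) for μ-almost every x. Define φ_p(h) = 2^{p−1} ∫_X sgn(h(x)) |h(x)|^p dμ(x). Then ‖f − g‖_{L^p}^p ≤ φ_p(f) − φ_p(g). -/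
/-!
With `ψ t = sign t * |t| ^ p`, the theorem is the integral of the pointwise inequality
`(b - a) ^ p ≤ 2 ^ (p - 1) * (ψ b - ψ a)` for `a ≤ b`. When `0 ≤ a` it follows from the
superadditivity `(b - a) ^ p + a ^ p ≤ b ^ p` of `t ^ p` on `[0, ∞)`; when `b ≤ 0` it reduces to
that case because `ψ` is odd; when `a < 0 < b` it is the convexity bound
`(b + |a|) ^ p ≤ 2 ^ (p - 1) * (b ^ p + |a| ^ p)`.
-/

open MeasureTheory

namespace Real

theorem measurable_sign : Measurable Real.sign := by
  unfold Real.sign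
  exact Measurable.ite measurableSet_Iio measurable_const
    (Measurable.ite measurableSet_Ioi measurable_const measurable_const)

theorem abs_sign_le_one (r : ℝ) : |Real.sign r| ≤ 1 := by
  rcases Real.sign_apply_eq r with h | h | h <;> simp [h]

theorem sign_mul_abs_pow_of_nonneg {t : ℝ} (ht : 0 ≤ t) {p : ℕ} (hp : p ≠ 0) :
    Real.sign t * |t| ^ p = t ^ p := by
  rcases ht.eq_or_lt with rfl | ht
  · simp [hp]
  · rw [Real.sign_of_pos ht, abs_of_pos ht, one_mul]

theorem sign_mul_abs_pow_neg (t : ℝ) (p : ℕ) :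
    Real.sign (-t) * |-t| ^ p = -(Real.sign t * |t| ^ p) := by
  rw [Real.sign_neg, abs_neg, neg_mul]

end Real

theorem sub_pow_le_pow_sub_pow_s3 {R : Type*} [Ring R] [PartialOrder R] [IsOrderedRing R]
    {a b : R} (ha : 0 ≤ a) (hab : a ≤ b) {p : ℕ} (hp : p ≠ 0) :
    (b - a) ^ p ≤ b ^ p - a ^ p := by
  have := pow_add_pow_le (sub_nonneg.mpr hab) ha hp
  rwa [sub_add_cancel, ← le_sub_iff_add_le] at this

theorem sub_pow_le_two_pow_mul_sign_mul_abs_pow_sub {a b : ℝ} (hab : a ≤ b) {p : ℕ} (hp : p ≠ 0) :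
    (b - a) ^ p ≤ 2 ^ (p - 1) * (Real.sign b * |b| ^ p - Real.sign a * |a| ^ p) := by
  have of_nonneg : ∀ {a b : ℝ}, 0 ≤ a → a ≤ b →
      (b - a) ^ p ≤ 2 ^ (p - 1) * (Real.sign b * |b| ^ p - Real.sign a * |a| ^ p) := by
    intro a b ha hab
    rw [Real.sign_mul_abs_pow_of_nonneg ha hp, Real.sign_mul_abs_pow_of_nonneg (ha.trans hab) hp]
    calc (b - a) ^ p ≤ b ^ p - a ^ p := sub_pow_le_pow_sub_pow_s3 ha hab hp
      _ ≤ 2 ^ (p - 1) * (b ^ p - a ^ p) :=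
        le_mul_of_one_le_left (by linarith [pow_le_pow_left₀ ha hab p])
          (one_le_pow₀ one_le_two)
  rcases le_or_gt 0 a with ha | ha
  · exact of_nonneg ha hab
  rcases le_or_gt b 0 with hb | hb
  · have := of_nonneg (neg_nonneg.mpr hb) (neg_le_neg hab)
    rw [Real.sign_mul_abs_pow_neg, Real.sign_mul_abs_pow_neg, neg_sub_neg] at this
    linarith
  · rw [Real.sign_mul_abs_pow_of_nonneg hb.le hp, ← neg_neg a, Real.sign_mul_abs_pow_neg,
      Real.sign_mul_abs_pow_of_nonneg (neg_nonneg.mpr ha.le) hp, sub_neg_eq_add, sub_neg_eq_add]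
    exact add_pow_le hb.le (neg_nonneg.mpr ha.le) p

theorem MeasureTheory.MemLp.integrable_sign_mul_abs_pow {X : Type*} [MeasurableSpace X]
    {μ : Measure X} {f : X → ℝ} {p : ℕ} (hf : MemLp f p μ) (hp : p ≠ 0) :
    Integrable (fun x => Real.sign (f x) * |f x| ^ p) μ :=
  (hf.integrable_norm_pow hp).bdd_mul (c := 1)
    (Real.measurable_sign.comp_aemeasurable hf.aemeasurable).aestronglyMeasurable
    (Filter.Eventually.of_forall fun x => Real.abs_sign_le_one (f x))

/-- If `g ≤ f` a.e. and `f, g ∈ L^p`, then `‖f − g‖_{L^p}^p ≤ φ_p(f) − φ_p(g)`,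
where `φ_p(h) = 2^{p−1} ∫ sgn(h)|h|^p dμ`. -/
theorem lp_pow_sub_le_phi_sub {X : Type*} [MeasurableSpace X] (μ : Measure X)
    (p : ℕ) (hp : 1 ≤ p) (f g : X → ℝ)
    (hf : MemLp f p μ) (hg : MemLp g p μ) (hle : ∀ᵐ x ∂μ, g x ≤ f x) :
    ∫ x, |f x - g x| ^ p ∂μ ≤
      2 ^ (p - 1) * ∫ x, Real.sign (f x) * |f x| ^ p ∂μ -
        2 ^ (p - 1) * ∫ x, Real.sign (g x) * |g x| ^ p ∂μ := by
  have hp0 : p ≠ 0 := Nat.one_le_iff_ne_zero.mp hp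
  have hif := hf.integrable_sign_mul_abs_pow hp0
  have hig := hg.integrable_sign_mul_abs_pow hp0
  rw [← mul_sub, ← integral_sub hif hig, ← integral_const_mul]
  refine integral_mono_ae ((hf.sub hg).integrable_norm_pow hp0) ((hif.sub hig).const_mul _) ?_
  filter_upwards [hle] with x hx
  rw [abs_of_nonneg (sub_nonneg.mpr hx)]
  exact sub_pow_le_two_pow_mul_sign_mul_abs_pow_sub hx hp0
end
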